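/- Let α ∈ (−1, 0) and let f : ℝ → ℝ be a nonnegative α-concave function with f ∈ L¹(ℝ). Then ∫_ℝ Δ_α f(x) dx ≤ 2 ∫_ℝ f(x) dx. -/

import Mathlib

/-!
For `α < 0` the `α`-mean dominates the minimum, so an `α`-concave `f` is quasi-concave. If
`M_α(f x, f w; 1/2) > s` with `f w ≤ f x`, then `f ≥ f w` on `[w, x]`, and `f > s` at every midpoint
of `x` with a point of `[w, x]`: on a segment of length `|x - w| / 2`. With `w = -y` this length is
`|(x + y) / 2|`, so `{Δ_α f > s}` lies in a centred interval of length `2 |{f > s}|`, and the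
layer-cake formula turns this into `∫ Δ_α f ≤ 2 ∫ f`. Measurability of `Δ_α f` comes from the
convexity of its superlevel sets, by the interchange law for `α`-means.
-/

open MeasureTheory Set
open scoped ENNReal

/-- The `α`-mean (for `α < 0`) of two nonnegative reals:
`M_α(a,b;t) = (t a^α + (1−t) b^α)^{1/α}` if `a, b > 0`, and `0` if `a = 0` or `b = 0`. -/
noncomputable def Malpha (α a b t : ℝ) : ℝ :=
  if 0 < a ∧ 0 < b then (t * a ^ α + (1 - t) * b ^ α) ^ (1 / α) else 0

/-- A nonnegative `f : ℝ → ℝ` is `α`-concave if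
`f(t x + (1−t) y) ≥ M_α(f(x), f(y); t)` for all `x, y` and `t ∈ [0,1]`. -/
def AlphaConcave1 (α : ℝ) (f : ℝ → ℝ) : Prop :=
  ∀ x y : ℝ, ∀ t : ℝ, t ∈ Set.Icc (0 : ℝ) 1 →
    Malpha α (f x) (f y) t ≤ f (t * x + (1 - t) * y)

/-- The `α`-difference function of `f : ℝ → ℝ`:
`Δ_α f(z) = sup { M_α(f(x), f(−y); 1/2) : (x+y)/2 = z }`, valued in `[0,∞]`. -/
noncomputable def diffAlpha1 (α : ℝ) (f : ℝ → ℝ) (z : ℝ) : ℝ≥0∞ :=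
  sSup {r : ℝ≥0∞ | ∃ x y : ℝ, (x + y) / 2 = z ∧
    r = ENNReal.ofReal (Malpha α (f x) (f (-y)) (1 / 2))}

lemma mul_add_one_sub_mul_pos {t p q : ℝ} (hp : 0 < p) (hq : 0 < q)
    (ht : t ∈ Icc 0 1) : 0 < t * p + (1 - t) * q :=
  (convex_Ioi (0 : ℝ) hp hq ht.1 (sub_nonneg.2 ht.2) (add_sub_cancel t 1) :)

section Malpha

variable {α a b t : ℝ}

lemma Malpha_of_pos (ha : 0 < a) (hb : 0 < b) :
    Malpha α a b t = (t * a ^ α + (1 - t) * b ^ α) ^ (1 / α) := if_pos ⟨ha, hb⟩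

lemma pos_of_Malpha_pos (h : 0 < Malpha α a b t) : 0 < a ∧ 0 < b := by
  by_contra hab
  simp only [Malpha, if_neg hab, lt_irrefl] at h

lemma Malpha_symm : Malpha α a b t = Malpha α b a (1 - t) := by
  simp only [Malpha, and_comm, sub_sub_cancel, add_comm]

lemma Malpha_pos (ha : 0 < a) (hb : 0 < b) (ht : t ∈ Icc 0 1) :
    0 < Malpha α a b t := by
  rw [Malpha_of_pos ha hb]
  exact Real.rpow_pos_of_pos
    (mul_add_one_sub_mul_pos (Real.rpow_pos_of_pos ha α) (Real.rpow_pos_of_pos hb α) ht) _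

lemma Malpha_self (hα : α ≠ 0) (ha : 0 < a) : Malpha α a a t = a := by
  rw [Malpha_of_pos ha ha, ← add_mul, add_sub_cancel, one_mul, ← Real.rpow_mul ha.le,
    mul_one_div_cancel hα, Real.rpow_one]

lemma Malpha_mono (hα : α < 0) {a' b' : ℝ} (ha : 0 < a) (hb : 0 < b) (haa' : a ≤ a')
    (hbb' : b ≤ b') (ht : t ∈ Icc 0 1) : Malpha α a b t ≤ Malpha α a' b' t := by
  have ha' := ha.trans_le haa'
  have hb' := hb.trans_le hbb'
  rw [Malpha_of_pos ha hb, Malpha_of_pos ha' hb']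
  refine Real.rpow_le_rpow_of_nonpos
    (mul_add_one_sub_mul_pos (Real.rpow_pos_of_pos ha' α) (Real.rpow_pos_of_pos hb' α) ht)
    (add_le_add ?_ ?_) (one_div_neg.2 hα).le
  exacts [mul_le_mul_of_nonneg_left (Real.rpow_le_rpow_of_nonpos ha haa' hα.le) ht.1,
    mul_le_mul_of_nonneg_left (Real.rpow_le_rpow_of_nonpos hb hbb' hα.le) (sub_nonneg.2 ht.2)]

lemma min_le_Malpha (hα : α < 0) (ha : 0 < a) (hb : 0 < b) (ht : t ∈ Icc 0 1) :
    min a b ≤ Malpha α a b t := by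
  have hm : 0 < min a b := lt_min ha hb
  calc min a b = Malpha α (min a b) (min a b) t := (Malpha_self hα.ne hm).symm
    _ ≤ Malpha α a b t := Malpha_mono hα hm hm (min_le_left a b) (min_le_right a b) ht

lemma Malpha_Malpha_comm (hα : α ≠ 0) {a₁ a₂ b₁ b₂ θ : ℝ} (ha₁ : 0 < a₁) (ha₂ : 0 < a₂)
    (hb₁ : 0 < b₁) (hb₂ : 0 < b₂) (hθ : θ ∈ Icc 0 1) (ht : t ∈ Icc 0 1) :
    Malpha α (Malpha α a₁ a₂ θ) (Malpha α b₁ b₂ θ) t =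
      Malpha α (Malpha α a₁ b₁ t) (Malpha α a₂ b₂ t) θ := by
  have base_pos : ∀ {p q s : ℝ}, 0 < p → 0 < q → s ∈ Icc 0 1 →
      0 < s * p ^ α + (1 - s) * q ^ α := fun hp hq hs =>
    mul_add_one_sub_mul_pos (Real.rpow_pos_of_pos hp α) (Real.rpow_pos_of_pos hq α) hs
  rw [Malpha_of_pos (Malpha_pos ha₁ ha₂ hθ) (Malpha_pos hb₁ hb₂ hθ),
    Malpha_of_pos (Malpha_pos ha₁ hb₁ ht) (Malpha_pos ha₂ hb₂ ht),
    Malpha_of_pos ha₁ ha₂, Malpha_of_pos hb₁ hb₂, Malpha_of_pos ha₁ hb₁, Malpha_of_pos ha₂ hb₂,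
    ← Real.rpow_mul (base_pos ha₁ ha₂ hθ).le, ← Real.rpow_mul (base_pos hb₁ hb₂ hθ).le,
    ← Real.rpow_mul (base_pos ha₁ hb₁ ht).le, ← Real.rpow_mul (base_pos ha₂ hb₂ ht).le,
    one_div_mul_cancel hα, Real.rpow_one, Real.rpow_one, Real.rpow_one, Real.rpow_one]
  ring_nf

end Malpha

lemma diffAlpha1_eq_iSup (α : ℝ) (f : ℝ → ℝ) (z : ℝ) :
    diffAlpha1 α f z = ⨆ x, ENNReal.ofReal (Malpha α (f x) (f (x - 2 * z)) (1 / 2)) := by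
  refine le_antisymm (sSup_le ?_) (iSup_le fun x => le_sSup ⟨x, 2 * z - x, by ring, by
    rw [neg_sub]⟩)
  rintro _ ⟨x, y, rfl, rfl⟩
  exact le_iSup_of_le x (by rw [show x - 2 * ((x + y) / 2) = -y by ring])

lemma measurable_of_convex_lt {β : Type*} [TopologicalSpace β] [MeasurableSpace β]
    [BorelSpace β] [LinearOrder β] [OrderTopology β] [SecondCountableTopology β] {g : ℝ → β}
    (h : ∀ r, Convex ℝ {z | r < g z}) : Measurable g :=
  measurable_of_Ioi fun r => (convex_iff_ordConnected.1 (h r)).measurableSet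

lemma lintegral_le_mul_lintegral_of_meas_lt_le {Ω : Type*} [MeasurableSpace Ω]
    {μ : Measure Ω} {g : Ω → ℝ≥0∞} {f : Ω → ℝ} (hg : Measurable g) (hf0 : 0 ≤ᵐ[μ] f)
    (hf : AEMeasurable f μ) {c : ℝ≥0∞} (hc : c ≠ ⊤)
    (h : ∀ s > 0, μ {x | ENNReal.ofReal s < g x} ≤ c * μ {x | s < f x}) :
    ∫⁻ x, g x ∂μ ≤ c * ∫⁻ x, ENNReal.ofReal (f x) ∂μ := by
  -- `g` may take the value `∞`; its truncations `min g n` are real-valued, so the real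
  -- layer-cake formula applies to them.
  have htrunc (n : ℕ) : ∫⁻ x, min (g x) n ∂μ ≤ c * ∫⁻ x, ENNReal.ofReal (f x) ∂μ := by
    have hfin (x : Ω) : min (g x) n ≠ ⊤ :=
      ((min_le_right _ _).trans_lt (ENNReal.natCast_lt_top n)).ne
    have hlevel (s : ℝ) (hs : s ∈ Ioi 0) :
        μ {x | s < (min (g x) n).toReal} ≤ c * μ {x | s < f x} :=
      (measure_mono fun x hx => ((ENNReal.ofReal_lt_iff_lt_toReal (le_of_lt hs) (hfin x)).2
        hx).trans_le (min_le_left _ _)).trans (h s hs)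
    calc ∫⁻ x, min (g x) n ∂μ = ∫⁻ x, ENNReal.ofReal (min (g x) n).toReal ∂μ := by
          simp_rw [ENNReal.ofReal_toReal (hfin _)]
      _ = ∫⁻ s in Ioi 0, μ {x | s < (min (g x) n).toReal} :=
          lintegral_eq_lintegral_meas_lt μ (ae_of_all _ fun _ => ENNReal.toReal_nonneg)
            (hg.min measurable_const).ennreal_toReal.aemeasurable
      _ ≤ ∫⁻ s in Ioi 0, c * μ {x | s < f x} := setLIntegral_mono' measurableSet_Ioi hlevel
      _ = c * ∫⁻ x, ENNReal.ofReal (f x) ∂μ := by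
          rw [lintegral_const_mul' c _ hc, lintegral_eq_lintegral_meas_lt μ hf0 hf]
  calc ∫⁻ x, g x ∂μ = ⨆ n : ℕ, ∫⁻ x, min (g x) n ∂μ := by
        rw [← lintegral_iSup (fun n => hg.min measurable_const)
          (fun m n hmn x => min_le_min_left _ (Nat.cast_le.2 hmn))]
        simp_rw [← inf_iSup_eq, ENNReal.iSup_natCast, inf_top_eq]
    _ ≤ _ := iSup_le htrunc

namespace AlphaConcave1

variable {α : ℝ} {f : ℝ → ℝ}

lemma min_le_of_mem_segment (hα : α < 0) (hf : AlphaConcave1 α f) {x y v : ℝ}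
    (hx : 0 < f x) (hy : 0 < f y) (hv : v ∈ segment ℝ x y) : min (f x) (f y) ≤ f v := by
  obtain ⟨a, b, ha, hb, hab, rfl⟩ := hv
  obtain rfl : b = 1 - a := by linarith
  exact (min_le_Malpha hα hx hy ⟨ha, by linarith⟩).trans (hf x y a ⟨ha, by linarith⟩)

lemma segment_subset_superlevel (hα : α < 0) (hf : AlphaConcave1 α f) {s x w : ℝ}
    (hs : 0 ≤ s) (hwx : f w ≤ f x) (h : s < Malpha α (f x) (f w) (1 / 2)) :
    segment ℝ ((x + w) / 2) x ⊆ {v | s < f v} := by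
  obtain ⟨hx, hw⟩ := pos_of_Malpha_pos (hs.trans_lt h)
  rintro _ ⟨a, b, ha, hb, hab, rfl⟩
  have hv : f w ≤ f (a * w + b * x) := by
    simpa [min_eq_left hwx] using
      min_le_of_mem_segment hα hf hw hx ⟨a, b, ha, hb, hab, rfl⟩
  calc s < Malpha α (f x) (f w) (1 / 2) := h
    _ ≤ Malpha α (f x) (f (a * w + b * x)) (1 / 2) :=
        Malpha_mono hα hx hw le_rfl hv (by norm_num)
    _ ≤ f (1 / 2 * x + (1 - 1 / 2) * (a * w + b * x)) := hf _ _ _ (by norm_num)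
    _ = f (a • ((x + w) / 2) + b • x) := by
        congr 1
        simp only [smul_eq_mul]
        linear_combination (-x / 2) * hab

lemma abs_sub_le_volume_superlevel (hα : α < 0) (hf : AlphaConcave1 α f) {s x w : ℝ}
    (hs : 0 ≤ s) (h : s < Malpha α (f x) (f w) (1 / 2)) :
    ENNReal.ofReal (|x - w| / 2) ≤ volume {v | s < f v} := by
  wlog hwx : f w ≤ f x generalizing x w
  · rw [abs_sub_comm]
    refine this ?_ (le_of_not_ge hwx)
    rwa [Malpha_symm, show (1 : ℝ) - 1 / 2 = 1 / 2 by norm_num] at h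
  calc ENNReal.ofReal (|x - w| / 2) = volume (segment ℝ ((x + w) / 2) x) := by
        rw [segment_eq_uIcc, Real.volume_interval, show x - (x + w) / 2 = (x - w) / 2 by ring,
          abs_div, abs_two]
    _ ≤ volume {v | s < f v} := measure_mono (segment_subset_superlevel hα hf hs hwx h)

lemma min_Malpha_le (hα : α < 0) (hf : AlphaConcave1 α f) {x₁ x₂ w₁ w₂ θ t : ℝ}
    (hθ : θ ∈ Icc 0 1) (ht : t ∈ Icc 0 1) (h₁ : 0 < Malpha α (f x₁) (f w₁) t)
    (h₂ : 0 < Malpha α (f x₂) (f w₂) t) :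
    min (Malpha α (f x₁) (f w₁) t) (Malpha α (f x₂) (f w₂) t) ≤
      Malpha α (f (θ * x₁ + (1 - θ) * x₂)) (f (θ * w₁ + (1 - θ) * w₂)) t := by
  obtain ⟨hx₁, hw₁⟩ := pos_of_Malpha_pos h₁
  obtain ⟨hx₂, hw₂⟩ := pos_of_Malpha_pos h₂
  calc _ ≤ Malpha α (Malpha α (f x₁) (f w₁) t) (Malpha α (f x₂) (f w₂) t) θ :=
        min_le_Malpha hα h₁ h₂ hθ
    _ = Malpha α (Malpha α (f x₁) (f x₂) θ) (Malpha α (f w₁) (f w₂) θ) t :=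
        (Malpha_Malpha_comm hα.ne hx₁ hx₂ hw₁ hw₂ hθ ht).symm
    _ ≤ _ := Malpha_mono hα (Malpha_pos hx₁ hx₂ hθ) (Malpha_pos hw₁ hw₂ hθ) (hf _ _ _ hθ)
        (hf _ _ _ hθ) ht

lemma convex_lt_diffAlpha1 (hα : α < 0) (hf : AlphaConcave1 α f) (r : ℝ≥0∞) :
    Convex ℝ {z | r < diffAlpha1 α f z} := by
  intro z₁ hz₁ z₂ hz₂ a b ha hb hab
  obtain rfl : b = 1 - a := by linarith
  simp only [mem_ofPred_eq, diffAlpha1_eq_iSup, lt_iSup_iff] at hz₁ hz₂ ⊢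
  obtain ⟨x₁, h₁⟩ := hz₁
  obtain ⟨x₂, h₂⟩ := hz₂
  refine ⟨a * x₁ + (1 - a) * x₂, ?_⟩
  calc r < ENNReal.ofReal (min (Malpha α (f x₁) (f (x₁ - 2 * z₁)) (1 / 2))
        (Malpha α (f x₂) (f (x₂ - 2 * z₂)) (1 / 2))) := by
        rw [ENNReal.ofReal_min]
        exact lt_min h₁ h₂
    _ ≤ ENNReal.ofReal (Malpha α (f (a * x₁ + (1 - a) * x₂))
        (f (a * (x₁ - 2 * z₁) + (1 - a) * (x₂ - 2 * z₂))) (1 / 2)) :=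
        ENNReal.ofReal_le_ofReal <| min_Malpha_le hα hf ⟨ha, by linarith⟩ (by norm_num)
          (ENNReal.ofReal_pos.1 (pos_of_gt h₁))
          (ENNReal.ofReal_pos.1 (pos_of_gt h₂))
    _ = _ := by
        simp only [smul_eq_mul]
        ring_nf

lemma measurable_diffAlpha1 (hα : α < 0) (hf : AlphaConcave1 α f) :
    Measurable (diffAlpha1 α f) :=
  measurable_of_convex_lt (convex_lt_diffAlpha1 hα hf)

lemma volume_lt_diffAlpha1_le (hα : α < 0) (hf : AlphaConcave1 α f) {s : ℝ} (hs : 0 ≤ s) :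
    volume {z | ENNReal.ofReal s < diffAlpha1 α f z} ≤ 2 * volume {v | s < f v} := by
  set m := volume {v | s < f v}
  rcases eq_or_ne m ⊤ with hm | hm
  · simp [hm]
  have hsub : {z | ENNReal.ofReal s < diffAlpha1 α f z} ⊆ Metric.closedBall 0 m.toReal := by
    intro z hz
    simp only [mem_ofPred_eq, diffAlpha1_eq_iSup, lt_iSup_iff] at hz
    obtain ⟨x, hx⟩ := hz
    have key : ENNReal.ofReal (|x - (x - 2 * z)| / 2) ≤ m :=
      abs_sub_le_volume_superlevel hα hf hs (ENNReal.ofReal_lt_ofReal_iff'.1 hx).1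
    rwa [show |x - (x - 2 * z)| / 2 = |z| by rw [sub_sub_cancel, abs_mul, abs_two]; ring,
      ← ENNReal.ofReal_toReal hm, ENNReal.ofReal_le_ofReal_iff ENNReal.toReal_nonneg,
      ← Real.norm_eq_abs, ← mem_closedBall_zero_iff] at key
  calc volume {z | ENNReal.ofReal s < diffAlpha1 α f z}
      ≤ volume (Metric.closedBall (0 : ℝ) m.toReal) := measure_mono hsub
    _ = 2 * m := by
        rw [Real.volume_closedBall, ENNReal.ofReal_mul zero_le_two, ENNReal.ofReal_ofNat,
          ENNReal.ofReal_toReal hm]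

end AlphaConcave1

theorem lintegral_diffAlpha1_le_two_general (α : ℝ) (hα₂ : α < 0)
    (f : ℝ → ℝ) (hf0 : ∀ x, 0 ≤ f x) (hf : AlphaConcave1 α f)
    (hint : Integrable f) :
    ∫⁻ x, diffAlpha1 α f x ≤ 2 * ∫⁻ x, ENNReal.ofReal (f x) :=
  lintegral_le_mul_lintegral_of_meas_lt_le (hf.measurable_diffAlpha1 hα₂) (ae_of_all _ hf0)
    hint.aemeasurable ENNReal.ofNat_ne_top fun _ hs => hf.volume_lt_diffAlpha1_le hα₂ hs.le

/-- For `α ∈ (−1, 0)` and a nonnegative `α`-concave `f ∈ L¹(ℝ)`,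
`∫ Δ_α f ≤ 2 ∫ f`. -/
theorem lintegral_diffAlpha1_le_two (α : ℝ) (hα₁ : -1 < α) (hα₂ : α < 0)
    (f : ℝ → ℝ) (hf0 : ∀ x, 0 ≤ f x) (hf : AlphaConcave1 α f)
    (hint : Integrable f) :
    ∫⁻ x, diffAlpha1 α f x ≤ 2 * ∫⁻ x, ENNReal.ofReal (f x) :=
  lintegral_diffAlpha1_le_two_general α hα₂ f hf0 hf hint
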